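/- arXiv:2309.08124 — 3 statements merged into one kernel-verified Lean document; each statement's English description precedes it below -/
import Mathlib

section
/- The Fermat cubic threefold {x₀³ + x₁³ + x₂³ + x₃³ + x₄³ = 0} ⊂ ℙ⁴ has exactly 30 Eckardt points, namely the points with exactly two nonzero coordinates 1 and ξ (in positions i < j) where ξ³ = -1: there are 10 choices of the pair (i,j) and 3 choices of ξ. -/
/-!
The polar quadric of the Fermat cubic at `p` is `∑ 3 pᵢ xᵢ²`, a diagonal form, so `p` is an
Eckardt point exactly when at most two of its coordinates are nonzero. A single nonzero
coordinate cannot have vanishing cube, so there are exactly two, at positions `i < j`; scaling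
the first to `1`, the second is a cube root `ξ` of `-1`. The support `{i, j}` and the normalised
coordinate `ξ` are determined by the point, giving `10 · 3 = 30` points.
-/

open Projectivization Finset
open scoped LinearAlgebra.Projectivization

section TwoPoint

variable {K ι : Type*} [Field K] [DecidableEq ι] {i j k : ι} {ξ : K}

def twoPoint (i j : ι) (ξ : K) : ι → K := fun k => if k = i then 1 else if k = j then ξ else 0

@[simp] lemma twoPoint_apply_left : twoPoint i j ξ i = 1 := if_pos rfl

lemma twoPoint_apply_right (hij : i ≠ j) : twoPoint i j ξ j = ξ := by
  simp [twoPoint, hij.symm]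

lemma twoPoint_apply_of_ne (hi : k ≠ i) (hj : k ≠ j) : twoPoint i j ξ k = 0 := by
  simp [twoPoint, hi, hj]

lemma twoPoint_ne_zero (i j : ι) (ξ : K) : twoPoint i j ξ ≠ 0 :=
  Function.ne_iff.2 ⟨i, by simp⟩

lemma sum_comp_twoPoint [Fintype ι] {M : Type*} [AddCommMonoid M] (hij : i ≠ j) (f : K → M)
    (hf : f 0 = 0) : ∑ k, f (twoPoint i j ξ k) = f 1 + f ξ := by
  rw [Fintype.sum_eq_add i j hij fun k hk => by rw [twoPoint_apply_of_ne hk.1 hk.2, hf],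
    twoPoint_apply_left, twoPoint_apply_right hij]

lemma filter_twoPoint_ne_zero [Fintype ι] [DecidableEq K] (hij : i ≠ j) (hξ : ξ ≠ 0) :
    ({k | twoPoint i j ξ k ≠ 0} : Finset ι) = {i, j} := by
  ext k
  by_cases hi : k = i
  · simp [hi]
  by_cases hj : k = j
  · simp [hj, twoPoint_apply_right hij, hξ]
  · simp [twoPoint_apply_of_ne hi hj, hi, hj]

lemma eq_smul_twoPoint {w : ι → K} (hij : i ≠ j) (hi : w i ≠ 0)
    (hw : ∀ k, k ≠ i → k ≠ j → w k = 0) : w = w i • twoPoint i j (w j / w i) := by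
  funext k
  by_cases hki : k = i
  · simp [hki]
  by_cases hkj : k = j
  · simp [hkj, twoPoint_apply_right hij, mul_div_cancel₀ _ hi]
  · simp [twoPoint_apply_of_ne hki hkj, hw k hki hkj]

end TwoPoint

lemma Matrix.rank_diagonal_const_mul {K ι : Type*} [Field K] [DecidableEq K] [Fintype ι]
    [DecidableEq ι] {c : K} (hc : c ≠ 0) (w : ι → K) :
    (Matrix.diagonal fun i => c * w i).rank = #{i | w i ≠ 0} := by
  rw [Matrix.rank_diagonal, Fintype.card_subtype]
  simp [hc]

section Fermat

variable {K ι : Type*} [Field K] [DecidableEq K] [Fintype ι]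

/-- `w` represents an Eckardt point of the Fermat cubic: its polar quadric `∑ 3 wᵢ xᵢ²` is
diagonal, so the rank condition counts nonzero coordinates. -/
def IsFermatEckardt (w : ι → K) : Prop :=
  ∑ i, w i ^ 3 = 0 ∧ #{i | w i ≠ 0} ≤ 2

lemma isFermatEckardt_smul_iff {c : K} (hc : c ≠ 0) (w : ι → K) :
    IsFermatEckardt (c • w) ↔ IsFermatEckardt w := by
  simp [IsFermatEckardt, mul_pow, ← mul_sum, hc]

lemma isFermatEckardt_twoPoint [DecidableEq ι] {i j : ι} {ξ : K} (hij : i ≠ j)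
    (hξ : ξ ^ 3 = -1) : IsFermatEckardt (twoPoint i j ξ) := by
  have hξ0 : ξ ≠ 0 := by rintro rfl; norm_num at hξ
  refine ⟨?_, ?_⟩
  · rw [sum_comp_twoPoint hij (· ^ 3) (zero_pow three_ne_zero), hξ, one_pow, add_neg_cancel]
  · rw [filter_twoPoint_ne_zero hij hξ0, card_pair hij]

lemma exists_twoPoint_of_isFermatEckardt [DecidableEq ι] [LinearOrder ι] {w : ι → K}
    (hw : w ≠ 0) (h : IsFermatEckardt w) :
    ∃ i j ξ, i < j ∧ ξ ^ 3 = -1 ∧ w = w i • twoPoint i j ξ := by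
  obtain ⟨hsum, hcard⟩ := h
  set s : Finset ι := {i | w i ≠ 0} with hs
  have hmem : ∀ {k}, k ∈ s ↔ w k ≠ 0 := by simp [hs]
  have hsum_s : ∑ k ∈ s, w k ^ 3 = 0 := by
    rwa [sum_filter_of_ne fun k _ hk => by simpa using hk]
  have hne : s.Nonempty :=
    let ⟨k, hk⟩ := Function.ne_iff.1 hw
    ⟨k, hmem.2 hk⟩
  obtain hone | htwo : #s = 1 ∨ #s = 2 := by have := hne.card_pos; omega
  · obtain ⟨a, hsa⟩ := card_eq_one.1 hone
    rw [hsa, sum_singleton] at hsum_s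
    exact absurd (pow_eq_zero_iff three_ne_zero |>.1 hsum_s) (hmem.1 (hsa ▸ mem_singleton_self a))
  obtain ⟨a, b, hab, hsab⟩ := card_eq_two.1 htwo
  wlog hlt : a < b generalizing a b
  · exact this b a hab.symm (hsab.trans (pair_comm a b)) (hab.symm.lt_of_le (not_lt.1 hlt))
  have ha : w a ≠ 0 := hmem.1 (hsab ▸ mem_insert_self a {b})
  have hoff : ∀ k, k ≠ a → k ≠ b → w k = 0 := fun k hka hkb => by
    by_contra hk
    simpa [hsab, hka, hkb] using hmem.2 hk
  rw [hsab, sum_pair hab] at hsum_s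
  refine ⟨a, b, w b / w a, hlt, ?_, eq_smul_twoPoint hab ha hoff⟩
  field_simp
  linear_combination hsum_s

variable [DecidableEq ι] [LinearOrder ι]

lemma isFermatEckardt_rep_iff (x : ℙ K (ι → K)) :
    IsFermatEckardt x.rep ↔
      ∃ i j ξ, i < j ∧ ξ ^ 3 = -1 ∧ x = mk K (twoPoint i j ξ) (twoPoint_ne_zero _ _ _) := by
  constructor
  · intro h
    obtain ⟨i, j, ξ, hij, hξ, hrep⟩ := exists_twoPoint_of_isFermatEckardt x.rep_nonzero h
    refine ⟨i, j, ξ, hij, hξ, ?_⟩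
    conv_lhs => rw [← x.mk_rep]
    exact (mk_eq_mk_iff' K _ _ _ _).2 ⟨_, hrep.symm⟩
  · rintro ⟨i, j, ξ, hij, hξ, rfl⟩
    obtain ⟨c, hc⟩ := exists_smul_eq_mk_rep K (twoPoint i j ξ) (twoPoint_ne_zero i j ξ)
    rw [← hc, Units.smul_def, isFermatEckardt_smul_iff c.ne_zero]
    exact isFermatEckardt_twoPoint hij.ne hξ

lemma mk_twoPoint_injOn :
    Set.InjOn (fun p : (ι × ι) × K => mk K (twoPoint p.1.1 p.1.2 p.2) (twoPoint_ne_zero _ _ _))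
      ({p | p.1 < p.2} ×ˢ {ξ | ξ ^ 3 = -1}) := by
  rintro ⟨⟨i, j⟩, ξ⟩ ⟨hij, hξ⟩ ⟨⟨i', j'⟩, ξ'⟩ ⟨hij', hξ'⟩ h
  obtain ⟨c, hc⟩ := (mk_eq_mk_iff K _ _ _ _).1 h
  have hξ0 : ξ ≠ 0 := by rintro rfl; norm_num at hξ
  have hξ0' : ξ' ≠ 0 := by rintro rfl; norm_num at hξ'
  have hsupp : ({i, j} : Set ι) = {i', j'} := by
    rw [← coe_pair, ← coe_pair, ← filter_twoPoint_ne_zero hij.ne hξ0,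
      ← filter_twoPoint_ne_zero hij'.ne hξ0', ← hc]
    simp [Units.smul_def, c.ne_zero]
  obtain ⟨rfl, rfl⟩ : i = i' ∧ j = j' := by
    rcases Set.pair_eq_pair_iff.1 hsupp with h | ⟨rfl, rfl⟩
    · exact h
    · exact absurd (hij.trans hij') (lt_irrefl i)
  have hc1 : (c : K) = 1 := by simpa [Units.smul_def] using congrFun hc i
  have hj := congrFun hc j
  simp only [Units.smul_def, hc1, one_smul, twoPoint_apply_right hij.ne] at hj
  rw [hj]

lemma setOf_isFermatEckardt_rep_eq_image :
    {x : ℙ K (ι → K) | IsFermatEckardt x.rep} =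
      (fun p : (ι × ι) × K => mk K (twoPoint p.1.1 p.1.2 p.2) (twoPoint_ne_zero _ _ _)) ''
        ({p | p.1 < p.2} ×ˢ {ξ | ξ ^ 3 = -1}) := by
  ext x
  simp only [Set.mem_ofPred_eq, isFermatEckardt_rep_iff, Set.mem_image, Set.mem_prod,
    Prod.exists]
  exact ⟨fun ⟨i, j, ξ, hij, hξ, hx⟩ => ⟨i, j, ξ, ⟨hij, hξ⟩, hx.symm⟩,
    fun ⟨i, j, ξ, ⟨hij, hξ⟩, hx⟩ => ⟨i, j, ξ, hij, hξ, hx.symm⟩⟩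

end Fermat

open scoped Pointwise in
lemma ncard_setOf_pow_three_eq_neg_one : {ξ : ℂ | ξ ^ 3 = -1}.ncard = 3 := by
  have hneg : {ξ : ℂ | ξ ^ 3 = -1} = -↑(Polynomial.nthRootsFinset 3 (1 : ℂ)) := by
    ext ξ
    rw [Set.mem_neg, Finset.mem_coe, Polynomial.mem_nthRootsFinset three_pos,
      Odd.neg_pow (by decide), neg_eq_iff_eq_neg, Set.mem_ofPred_eq]
  rw [hneg, Set.ncard_neg, Set.ncard_coe_finset,
    (Complex.isPrimitiveRoot_exp 3 three_ne_zero).card_nthRootsFinset]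

lemma ncard_setOf_fst_lt_snd : {p : Fin 5 × Fin 5 | p.1 < p.2}.ncard = 10 := by
  rw [Set.ncard_eq_toFinset_card']
  decide

/-- The Fermat cubic threefold has exactly 30 Eckardt points (points whose polar quadric
`∑ 3pᵢxᵢ²` has symmetric matrix of rank ≤ 2): the points with exactly two nonzero
coordinates, equal to `1` (in position `i`) and `ξ` (in position `j > i`) with `ξ³ = -1`. -/
theorem stmt_5 :
    {x : Projectivization ℂ (Fin 5 → ℂ) | (∑ i, x.rep i ^ 3 = 0) ∧
        (Matrix.diagonal (fun i => 3 * x.rep i)).rank ≤ 2} =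
      {x : Projectivization ℂ (Fin 5 → ℂ) |
        ∃ (v : Fin 5 → ℂ) (hv : v ≠ 0) (i j : Fin 5) (ξ : ℂ), i < j ∧ ξ ^ 3 = -1 ∧
          (v = fun k => if k = i then 1 else if k = j then ξ else 0) ∧
          x = Projectivization.mk ℂ v hv} ∧
    {x : Projectivization ℂ (Fin 5 → ℂ) | (∑ i, x.rep i ^ 3 = 0) ∧
        (Matrix.diagonal (fun i => 3 * x.rep i)).rank ≤ 2}.ncard = 30 := by
  have hE : {x : Projectivization ℂ (Fin 5 → ℂ) | (∑ i, x.rep i ^ 3 = 0) ∧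
      (Matrix.diagonal (fun i => 3 * x.rep i)).rank ≤ 2} = {x | IsFermatEckardt x.rep} := by
    simp only [IsFermatEckardt, Matrix.rank_diagonal_const_mul (three_ne_zero (α := ℂ))]
  rw [hE]
  refine ⟨?_, ?_⟩
  · ext x
    rw [Set.mem_ofPred_eq, isFermatEckardt_rep_iff]
    constructor
    · rintro ⟨i, j, ξ, hij, hξ, hx⟩
      exact ⟨_, _, i, j, ξ, hij, hξ, rfl, hx⟩
    · rintro ⟨_, _, i, j, ξ, hij, hξ, rfl, hx⟩
      exact ⟨i, j, ξ, hij, hξ, hx⟩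
  · rw [setOf_isFermatEckardt_rep_eq_image, mk_twoPoint_injOn.ncard_image,
      Set.ncard_prod, ncard_setOf_fst_lt_snd, ncard_setOf_pow_three_eq_neg_one]
end

section
/- The cubic threefold {x₀²x₂ + x₂²x₄ + x₁²x₃ + x₃²x₀ + x₄³ = 0} ⊂ ℙ⁴ has exactly one Eckardt point, namely (0:1:0:0:0). -/
/-!
A point with polar matrix of rank ≤ 2 has all 3 × 3 minors of that matrix zero. Two of them
combine to `p₃³ = 0` and two others to `3 p₀³ = 0`; then the minors through row 1 read
`p₁² p₂ = p₁² p₄ = 0`. If `p₁ = 0`, one more minor and the cubic equation are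
`p₂ (3 p₄² - p₂²) = 0` and `p₄ (p₂² + p₄²) = 0`, whose resultant `4 p₂ p₄³` kills everything.
Conversely, at `(0:1:0:0:0)` the polar matrix has only two nonzero rows.
-/

theorem Matrix.det_submatrix_eq_zero_of_rank_lt {K m n : Type*} [Field K] [Fintype n] {k : ℕ}
    (A : Matrix m n K) (f : Fin k → m) (g : Fin k → n) (h : A.rank < k) :
    (A.submatrix f g).det = 0 := by
  by_contra hdet
  have hminor : (A.submatrix f g).rank = k := by
    simpa using (A.submatrix f g).rank_of_isUnit ((isUnit_iff_isUnit_det _).mpr (Ne.isUnit hdet))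
  have := A.rank_submatrix_le f g
  omega

namespace EckardtCubic

variable {K : Type*} [Field K]

def cubicForm (p : Fin 5 → K) : K :=
  p 0 ^ 2 * p 2 + p 2 ^ 2 * p 4 + p 1 ^ 2 * p 3 + p 3 ^ 2 * p 0 + p 4 ^ 3

def polarMatrix (p : Fin 5 → K) : Matrix (Fin 5) (Fin 5) K :=
  !![p 2, 0, p 0, p 3, 0;
     0, p 3, 0, p 1, 0;
     p 0, 0, p 4, 0, p 2;
     p 3, p 1, 0, p 0, 0;
     0, 0, p 2, 0, 3 * p 4]

def IsEckardtPoint (p : Fin 5 → K) : Prop :=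
  cubicForm p = 0 ∧ (polarMatrix p).rank ≤ 2

variable {p : Fin 5 → K}

theorem det_polarMatrix_submatrix_eq_zero (hrk : (polarMatrix p).rank ≤ 2)
    (f g : Fin 3 → Fin 5) :
    ((polarMatrix p).submatrix f g).det = 0 :=
  Matrix.det_submatrix_eq_zero_of_rank_lt _ f g (by omega)

theorem apply_three_eq_zero (hrk : (polarMatrix p).rank ≤ 2) : p 3 = 0 := by
  have m₁ := det_polarMatrix_submatrix_eq_zero hrk ![0, 1, 3] ![0, 1, 3]
  have m₂ := det_polarMatrix_submatrix_eq_zero hrk ![1, 2, 3] ![1, 3, 4]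
  simp only [Matrix.det_fin_three] at m₁ m₂
  simp [polarMatrix] at m₁ m₂
  exact pow_eq_zero_iff three_ne_zero |>.mp (by linear_combination -m₁ - m₂)

theorem apply_zero_eq_zero (hrk : (polarMatrix p).rank ≤ 2) (h3 : (3 : K) ≠ 0) : p 0 = 0 := by
  have m₁ := det_polarMatrix_submatrix_eq_zero hrk ![0, 2, 3] ![0, 2, 3]
  have m₂ := det_polarMatrix_submatrix_eq_zero hrk ![0, 3, 4] ![0, 3, 4]
  simp only [Matrix.det_fin_three] at m₁ m₂
  simp [polarMatrix] at m₁ m₂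
  have : 3 * p 0 ^ 3 = 0 := by linear_combination m₂ - 3 * m₁
  exact pow_eq_zero_iff three_ne_zero |>.mp ((mul_eq_zero.mp this).resolve_left h3)

theorem apply_two_eq_zero (hrk : (polarMatrix p).rank ≤ 2) (h1 : p 1 ≠ 0) : p 2 = 0 := by
  have m := det_polarMatrix_submatrix_eq_zero hrk ![1, 2, 3] ![1, 3, 4]
  simp only [Matrix.det_fin_three] at m
  simp [polarMatrix] at m
  have : p 1 ^ 2 * p 2 = 0 := by linear_combination m + p 2 * p 0 * apply_three_eq_zero hrk
  exact (mul_eq_zero.mp this).resolve_left (pow_ne_zero 2 h1)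

theorem apply_four_eq_zero (hrk : (polarMatrix p).rank ≤ 2) (h1 : p 1 ≠ 0) : p 4 = 0 := by
  have m := det_polarMatrix_submatrix_eq_zero hrk ![1, 2, 3] ![1, 2, 3]
  simp only [Matrix.det_fin_three] at m
  simp [polarMatrix] at m
  have : p 1 ^ 2 * p 4 = 0 := by linear_combination -m + p 4 * p 0 * apply_three_eq_zero hrk
  exact (mul_eq_zero.mp this).resolve_left (pow_ne_zero 2 h1)

theorem eq_zero_of_apply_one_eq_zero (hrk : (polarMatrix p).rank ≤ 2) (h2 : (2 : K) ≠ 0)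
    (h3 : (3 : K) ≠ 0) (hf : cubicForm p = 0) (hp1 : p 1 = 0) : p = 0 := by
  have hp0 := apply_zero_eq_zero hrk h3
  have hp3 := apply_three_eq_zero hrk
  have m := det_polarMatrix_submatrix_eq_zero hrk ![0, 2, 4] ![0, 2, 4]
  simp only [Matrix.det_fin_three] at m
  simp [polarMatrix, hp0] at m
  simp only [cubicForm, hp0, hp1, hp3] at hf
  have hm : p 2 * (3 * p 4 ^ 2 - p 2 ^ 2) = 0 := by linear_combination m
  have hf' : p 4 * (p 2 ^ 2 + p 4 ^ 2) = 0 := by linear_combination hf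
  have hres : 2 * 2 * (p 2 * p 4 ^ 3) = 0 := by linear_combination p 4 * hm + p 2 * hf'
  obtain ⟨hp2, hp4⟩ : p 2 = 0 ∧ p 4 = 0 := by
    rcases mul_eq_zero.mp ((mul_eq_zero.mp hres).resolve_left (mul_ne_zero h2 h2)) with hp2 | hp4
    · exact ⟨hp2, pow_eq_zero_iff three_ne_zero |>.mp (by linear_combination hf' - p 4 * p 2 * hp2)⟩
    · have hp4 := pow_eq_zero_iff three_ne_zero |>.mp hp4
      exact ⟨pow_eq_zero_iff three_ne_zero |>.mp (by linear_combination -hm + 3 * p 2 * p 4 * hp4),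
        hp4⟩
  funext i
  fin_cases i <;> assumption

theorem isEckardtPoint_smul_single (t : K) :
    IsEckardtPoint (t • ![0, 1, 0, 0, 0] : Fin 5 → K) := by
  refine ⟨by simp [cubicForm], ?_⟩
  have hrows : Function.support (polarMatrix (t • ![0, 1, 0, 0, 0] : Fin 5 → K)).row ⊆
      ({1, 3} : Finset (Fin 5)) := by
    intro i hi
    fin_cases i <;> simp_all [polarMatrix, Function.mem_support]
  exact Matrix.rank_le_card_of_support_subset _ _ hrows

end EckardtCubic

open EckardtCubic in
/-- The cubic threefold `x₀²x₂ + x₂²x₄ + x₁²x₃ + x₃²x₀ + x₄³ = 0` has exactly one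
Eckardt point, namely `(0:1:0:0:0)` (Eckardt: the symmetric matrix of the polar
quadric `∑ pᵢ ∂f/∂xᵢ` has rank ≤ 2). -/
theorem stmt_7 (p : Fin 5 → ℂ) (hp : p ≠ 0) :
    (p 0 ^ 2 * p 2 + p 2 ^ 2 * p 4 + p 1 ^ 2 * p 3 + p 3 ^ 2 * p 0 + p 4 ^ 3 = 0 ∧
      (!![p 2, 0, p 0, p 3, 0;
          0, p 3, 0, p 1, 0;
          p 0, 0, p 4, 0, p 2;
          p 3, p 1, 0, p 0, 0;
          0, 0, p 2, 0, 3 * p 4] : Matrix (Fin 5) (Fin 5) ℂ).rank ≤ 2) ↔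
    ∃ t : ℂ, t ≠ 0 ∧ p = t • ![0, 1, 0, 0, 0] := by
  change IsEckardtPoint p ↔ _
  constructor
  · rintro ⟨hf, hrk⟩
    have hp1 : p 1 ≠ 0 := fun hp1 =>
      hp (eq_zero_of_apply_one_eq_zero hrk two_ne_zero three_ne_zero hf hp1)
    refine ⟨p 1, hp1, funext fun i => ?_⟩
    fin_cases i
    · simp [apply_zero_eq_zero hrk three_ne_zero]
    · simp
    · simp [apply_two_eq_zero hrk hp1]
    · simp [apply_three_eq_zero hrk]
    · simp [apply_four_eq_zero hrk hp1]
  · rintro ⟨t, -, rfl⟩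
    exact isEckardtPoint_smul_single t
end

section
/- A smooth cubic hypersurface X ⊂ ℙ⁴ over ℂ contains no 2-plane: if f is a cubic form in x₀,...,x₄ vanishing identically on a 3-dimensional linear subspace of ℂ⁵, then f has a singular point on that subspace, i.e. a nonzero point where all partial derivatives of f vanish. -/
/-!
For `v ∈ W` the gradient of `f` at `v` kills `W`, because `f` vanishes on every line through `v`
inside `W`. If `c₀, c₁` span a complement of `W`, the gradient at `v` therefore vanishes as soon
as the directional derivatives `∂_{c₀} f` and `∂_{c₁} f` do. Restricted to `W ≅ ℂ³` these are two
quadratic forms, i.e. two conics in `ℙ²`, and two plane conics always meet: some member of their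
pencil is degenerate (an eigenvalue argument), hence contains a line, on which the other conic
has a point.
-/

open MvPolynomial Module Submodule

namespace MvPolynomial

variable {σ R : Type*} [Fintype σ]

section CommSemiring

variable [CommSemiring R] {p : MvPolynomial σ R}

theorem IsHomogeneous.exists_linearMap_eval (hp : p.IsHomogeneous 1) :
    ∃ ℓ : (σ → R) →ₗ[R] R, ∀ v, ℓ v = eval v p := by
  have hc (i : σ) : pderiv i p = C (coeff 0 (pderiv i p)) :=
    totalDegree_eq_zero_iff_eq_C.mp ((totalDegree_zero_iff_isHomogeneous σ).mpr hp.pderiv)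
  refine ⟨Fintype.linearCombination R fun i => coeff 0 (pderiv i p), fun v => ?_⟩
  have euler := congrArg (eval v) hp.sum_X_mul_pderiv
  conv_lhs at euler => enter [2, 2, i]; rw [hc i]
  simp only [one_smul, map_sum, eval_mul, eval_X, eval_C] at euler
  simp [Fintype.linearCombination_apply, ← euler]

theorem IsHomogeneous.exists_quadraticMap_eval [Invertible (2 : R)] (hp : p.IsHomogeneous 2) :
    ∃ Q : QuadraticMap R (σ → R) R, ∀ v, Q v = eval v p := by
  choose ℓ hℓ using fun i => (hp.pderiv (i := i)).exists_linearMap_eval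
  refine ⟨(⅟2 : R) • ∑ i, QuadraticMap.linMulLin (LinearMap.proj i) (ℓ i), fun v => ?_⟩
  have euler := congrArg (eval v) hp.sum_X_mul_pderiv
  simp only [map_sum, eval_mul, eval_X, map_nsmul, ← hℓ] at euler
  simp [QuadraticMap.linMulLin_apply, euler]

theorem derivative_aeval (g : σ → Polynomial R) (p : MvPolynomial σ R) :
    Polynomial.derivative (aeval g p) =
      ∑ i, aeval g (pderiv i p) * Polynomial.derivative (g i) := by
  classical
  induction p using MvPolynomial.induction_on with
  | C a => simp
  | add p q hp hq => simp only [map_add, hp, hq, add_mul, Finset.sum_add_distrib]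
  | mul_X p i hp =>
    simp only [map_mul, aeval_X, Polynomial.derivative_mul, hp, Derivation.leibniz, pderiv_X,
      smul_eq_mul, map_add, add_mul, Finset.sum_add_distrib, Finset.sum_mul]
    simp [Pi.single_apply, mul_comm, mul_assoc, add_comm]

end CommSemiring

theorem sum_mul_eval_pderiv_eq_zero [CommRing R] [IsDomain R] [Infinite R]
    {f : MvPolynomial σ R} {v u : σ → R} (h : ∀ t : R, eval (v + t • u) f = 0) :
    ∑ i, u i * eval v (pderiv i f) = 0 := by
  let line (i : σ) : Polynomial R := Polynomial.C (v i) + Polynomial.C (u i) * Polynomial.X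
  have eval_line (t : R) (p : MvPolynomial σ R) :
      (aeval line p).eval t = eval (v + t • u) p := by
    have : (fun i => Polynomial.aeval t (line i)) = v + t • u := by
      funext i
      simp only [line, Polynomial.coe_aeval_eq_eval, Polynomial.eval_add, Polynomial.eval_mul,
        Polynomial.eval_C, Polynomial.eval_X, Pi.add_apply, Pi.smul_apply, smul_eq_mul, mul_comm]
    rw [← Polynomial.coe_aeval_eq_eval, ← AlgHom.comp_apply, comp_aeval, this]
    rfl
  have hzero : aeval line f = 0 :=
    Polynomial.funext fun t => by rw [eval_line, h, Polynomial.eval_zero]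
  have := congrArg (Polynomial.eval 0) (derivative_aeval line f)
  rw [hzero, Polynomial.derivative_zero, Polynomial.eval_zero, Polynomial.eval_finsetSum] at this
  simp only [Polynomial.eval_mul, eval_line, zero_smul, add_zero, line, Polynomial.derivative_add,
    Polynomial.derivative_C, zero_add, Polynomial.derivative_C_mul_X, Polynomial.eval_C] at this
  rw [this]
  simp only [mul_comm]

end MvPolynomial

namespace QuadraticMap

variable {K V : Type*} [Field K] [AddCommGroup V] [Module K V]

theorem apply_smul_add_smul (Q : QuadraticMap K V K) (a b : K) (x y : V) :
    Q (a • x + b • y) = a * a * Q x + b * b * Q y + a * b * polar Q x y := by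
  rw [QuadraticMap.map_add Q, QuadraticMap.map_smul, QuadraticMap.map_smul, polar_smul_left,
    polar_smul_right]
  simp only [smul_eq_mul]
  ring

theorem apply_eq_zero_of_polarBilin_eq_zero [NeZero (2 : K)] {Q : QuadraticMap K V K} {k : V}
    (hk : Q.polarBilin k = 0) : Q k = 0 := by
  have := polar_self Q k
  rw [← polarBilin_apply_apply, hk, LinearMap.zero_apply, eq_comm, two_nsmul, ← two_mul] at this
  exact (mul_eq_zero.mp this).resolve_left two_ne_zero

variable [IsAlgClosed K]

theorem exists_ne_zero_polarBilin_eq_zero_or_eq_smul [FiniteDimensional K V] [Nontrivial V]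
    (Q₁ Q₂ : QuadraticMap K V K) :
    ∃ k ≠ 0, Q₂.polarBilin k = 0 ∨ ∃ μ : K, Q₁.polarBilin k = μ • Q₂.polarBilin k := by
  by_cases hinj : Function.Injective Q₂.polarBilin
  · let e := LinearMap.linearEquivOfInjective _ hinj Subspace.dual_finrank_eq.symm
    obtain ⟨μ, hμ⟩ := Module.End.exists_eigenvalue (e.symm.toLinearMap ∘ₗ Q₁.polarBilin)
    obtain ⟨k, hk⟩ := hμ.exists_hasEigenvector
    refine ⟨k, hk.2, Or.inr ⟨μ, ?_⟩⟩
    simpa [e] using congrArg e hk.apply_eq_smul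
  · rw [injective_iff_map_eq_zero] at hinj
    push Not at hinj
    obtain ⟨k, hk, hk0⟩ := hinj
    exact ⟨k, hk0, Or.inl hk⟩

variable [NeZero (2 : K)]

theorem exists_ne_zero_mem_span_pair_eq_zero (Q : QuadraticMap K V K) {u v : V}
    (huv : LinearIndependent K ![u, v]) : ∃ x ∈ span K {u, v}, x ≠ 0 ∧ Q x = 0 := by
  by_cases hu : Q u = 0
  · exact ⟨u, subset_span (by simp), huv.ne_zero 0, hu⟩
  obtain ⟨s, hs⟩ := exists_quadratic_eq_zero (b := polar Q u v) (c := Q v) hu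
    (IsAlgClosed.exists_eq_mul_self _)
  refine ⟨s • u + (1 : K) • v, mem_span_pair.mpr ⟨s, 1, rfl⟩, fun h => ?_, ?_⟩
  · exact one_ne_zero (LinearIndependent.pair_iff.mp huv s 1 h).2
  · rw [apply_smul_add_smul]
    linear_combination hs

variable [FiniteDimensional K V]

theorem exists_ne_zero_eq_zero (hV : 2 ≤ finrank K V) (Q : QuadraticMap K V K) :
    ∃ x ≠ 0, Q x = 0 := by
  obtain ⟨u, hu⟩ := (finrank_pos_iff_exists_ne_zero (R := K) (M := V)).mp (by omega)
  obtain ⟨v, huv⟩ := exists_linearIndependent_pair_of_one_lt_finrank (R := K) (by omega) hu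
  obtain ⟨x, -, hx⟩ := Q.exists_ne_zero_mem_span_pair_eq_zero huv
  exact ⟨x, hx⟩

theorem exists_ne_zero_eq_zero_of_polarBilin_eq_zero (hV : 3 ≤ finrank K V)
    {C : QuadraticMap K V K} {k : V} (hk0 : k ≠ 0) (hk : C.polarBilin k = 0)
    (Q : QuadraticMap K V K) : ∃ z ≠ 0, C z = 0 ∧ Q z = 0 := by
  obtain ⟨P, hP⟩ := (K ∙ k).exists_isCompl
  have hP2 : 2 ≤ finrank K P := by
    have := finrank_add_eq_of_isCompl hP
    rw [finrank_span_singleton hk0] at this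
    omega
  obtain ⟨x, hx0, hCx⟩ := (C.comp P.subtype).exists_ne_zero_eq_zero hP2
  have hkx : LinearIndependent K ![k, (x : V)] := by
    refine (LinearIndependent.pair_iff' hk0).mpr fun a hax => hx0 (Subtype.ext ?_)
    exact disjoint_def.mp hP.disjoint x (hax ▸ smul_mem _ a (mem_span_singleton_self k)) x.2
  -- `C` vanishes on the whole plane spanned by its radical vector `k` and its zero `x`.
  obtain ⟨z, hz, hz0, hQz⟩ := Q.exists_ne_zero_mem_span_pair_eq_zero hkx
  obtain ⟨a, b, rfl⟩ := mem_span_pair.mp hz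
  refine ⟨_, hz0, ?_, hQz⟩
  rw [apply_smul_add_smul, ← polarBilin_apply_apply, hk, apply_eq_zero_of_polarBilin_eq_zero hk]
  simp [show C x = 0 from hCx]

theorem exists_ne_zero_eq_zero_and_eq_zero (hV : 3 ≤ finrank K V) (Q₁ Q₂ : QuadraticMap K V K) :
    ∃ x ≠ 0, Q₁ x = 0 ∧ Q₂ x = 0 := by
  have : Nontrivial V := Module.nontrivial_of_finrank_pos (R := K) (by omega)
  obtain ⟨k, hk0, hk | ⟨μ, hk⟩⟩ := exists_ne_zero_polarBilin_eq_zero_or_eq_smul Q₁ Q₂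
  · obtain ⟨x, hx0, hx₂, hx₁⟩ := exists_ne_zero_eq_zero_of_polarBilin_eq_zero hV hk0 hk Q₁
    exact ⟨x, hx0, hx₁, hx₂⟩
  · have hC : (Q₁ - μ • Q₂).polarBilin k = 0 := by
      ext y
      have := LinearMap.congr_fun hk y
      simp only [polarBilin_apply_apply, polar, LinearMap.smul_apply, sub_apply, smul_apply,
        smul_eq_mul, LinearMap.zero_apply] at this ⊢
      linear_combination this
    obtain ⟨x, hx0, hCx, hx₂⟩ := exists_ne_zero_eq_zero_of_polarBilin_eq_zero hV hk0 hC Q₂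
    refine ⟨x, hx0, ?_, hx₂⟩
    simpa [hx₂] using hCx

end QuadraticMap

theorem Submodule.exists_sup_span_range_eq_top {K V : Type*} [DivisionRing K] [AddCommGroup V]
    [Module K V] [FiniteDimensional K V] (W : Submodule K V) {n : ℕ}
    (h : finrank K W + n = finrank K V) : ∃ c : Fin n → V, W ⊔ span K (Set.range c) = ⊤ := by
  obtain ⟨P, hP⟩ := W.exists_isCompl
  have hPn : finrank K P = n := by
    have := finrank_add_eq_of_isCompl hP
    omega
  let b := finBasisOfFinrankEq K P hPn
  refine ⟨P.subtype ∘ b, ?_⟩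
  rw [← hP.sup_eq_top, Set.range_comp, ← map_span, b.span_eq, map_subtype_top]

/-- A smooth cubic hypersurface in ℙ⁴ contains no 2-plane: if a cubic form `f` in five
variables vanishes identically on a 3-dimensional linear subspace of ℂ⁵, then `f` has a
singular point on that subspace. -/
theorem stmt_18 (f : MvPolynomial (Fin 5) ℂ) (hf : f.IsHomogeneous 3)
    (W : Submodule ℂ (Fin 5 → ℂ)) (hW : Module.finrank ℂ W = 3)
    (hvan : ∀ v ∈ W, eval v f = 0) :
    ∃ v ∈ W, v ≠ 0 ∧ ∀ i, eval v (pderiv i f) = 0 := by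
  obtain ⟨c, hc⟩ := W.exists_sup_span_range_eq_top (n := 2) (by simp [hW])
  have hQ (j : Fin 2) : ∃ Q : QuadraticMap ℂ (Fin 5 → ℂ) ℂ,
      ∀ v, Q v = ∑ i, c j i * eval v (pderiv i f) := by
    obtain ⟨Q, hQv⟩ := (IsHomogeneous.sum Finset.univ _ 2 fun i _ =>
      (hf.pderiv (i := i)).C_mul (c j i)).exists_quadraticMap_eval
    exact ⟨Q, fun v => by simp [hQv]⟩
  choose Q hQ using hQ
  obtain ⟨⟨v, hvW⟩, hv0, h₀, h₁⟩ := QuadraticMap.exists_ne_zero_eq_zero_and_eq_zero hW.ge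
    ((Q 0).comp W.subtype) ((Q 1).comp W.subtype)
  refine ⟨v, hvW, by simpa using hv0, fun i => ?_⟩
  have hker : W ⊔ span ℂ (Set.range c) ≤
      LinearMap.ker (Fintype.linearCombination ℂ fun i => eval v (pderiv i f)) := by
    refine sup_le (fun u hu => ?_) (span_le.mpr (Set.range_subset_iff.mpr fun j => ?_)) <;>
      simp only [SetLike.mem_coe, LinearMap.mem_ker, Fintype.linearCombination_apply, smul_eq_mul]
    · exact sum_mul_eval_pderiv_eq_zero fun t => hvan _ (W.add_mem hvW (W.smul_mem t hu))
    · fin_cases j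
      · simpa [hQ] using h₀
      · simpa [hQ] using h₁
  simpa using hker (hc ▸ mem_top : Pi.single i 1 ∈ _)
end
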